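/- Let p > 0 and α = 1/p. The sequence g(j) = (log(j+2))^{-α} belongs to the weak weighted class ℓ^{p,∞}_v with weight v(j) = 1/(j+1); that is, sup_{s>0} s^p · ∑_{j : g(j) > s} 1/(j+1) < ∞. -/

import Mathlib

/-!
Since `x ↦ x ^ (-1/p)` is decreasing, `(log (j + 2)) ^ (-1/p) > s` means `log (j + 2) < t` with
`t = s ^ (-p)`. Those `j` lie below `exp t`, so the weighted count is at most the harmonic number
`H_⌊exp t⌋ ≤ 1 + t`, and it vanishes unless `t > log 2`; in both cases it is `O(t)`, and
`s ^ p * t = 1`.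
-/

open Real

lemma tsum_subtype_le_sum_of_imp_mem {ι : Type*} {f : ι → ℝ} (hf : 0 ≤ f) {P : ι → Prop}
    {u : Finset ι} (hP : ∀ j, P j → j ∈ u) :
    ∑' j : {j // P j}, f j ≤ ∑ j ∈ u, f j := by
  refine Real.tsum_le_of_sum_le (fun j => hf j) fun v => ?_
  calc ∑ j ∈ v, f j = ∑ j ∈ v.map (Function.Embedding.subtype P), f j :=
        (Finset.sum_map v (.subtype P) f).symm
    _ ≤ ∑ j ∈ u, f j := by
      refine Finset.sum_le_sum_of_subset_of_nonneg (fun j hj => ?_) fun j _ _ => hf j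
      obtain ⟨i, -, rfl⟩ := Finset.mem_map.mp hj
      exact hP i i.2

lemma lt_floor_exp_of_log_add_two_lt {j : ℕ} {t : ℝ} (h : log ((j : ℝ) + 2) < t) :
    j < ⌊exp t⌋₊ := by
  have hexp : (j : ℝ) + 2 < exp t := (log_lt_iff_lt_exp (by positivity)).mp h
  have : j + 2 ≤ ⌊exp t⌋₊ := Nat.le_floor (by push_cast; linarith)
  omega

section LogLevelSet

variable {P : ℕ → Prop} {t : ℝ}

lemma tsum_one_div_succ_le_one_add_of_log_add_two_lt (ht : 0 ≤ t)
    (hP : ∀ j, P j → log ((j : ℝ) + 2) < t) :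
    ∑' j : {j // P j}, (1 : ℝ) / ((j.1 : ℝ) + 1) ≤ 1 + t := by
  set N := ⌊exp t⌋₊
  have hlogN : log N ≤ t := by
    rcases N.eq_zero_or_pos with hN | hN
    · simpa [hN] using ht
    · exact (log_le_iff_le_exp (by exact_mod_cast hN)).mpr (Nat.floor_le (exp_pos t).le)
  calc ∑' j : {j // P j}, (1 : ℝ) / ((j.1 : ℝ) + 1)
      ≤ ∑ j ∈ Finset.range N, (1 : ℝ) / ((j : ℝ) + 1) :=
        tsum_subtype_le_sum_of_imp_mem (f := fun j : ℕ => 1 / ((j : ℝ) + 1))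
          (fun j => by positivity)
          fun j hj => Finset.mem_range.mpr (lt_floor_exp_of_log_add_two_lt (hP j hj))
    _ = harmonic N := by simp [harmonic, one_div]
    _ ≤ 1 + log N := harmonic_le_one_add_log N
    _ ≤ 1 + t := by linarith

lemma tsum_one_div_succ_le_mul_of_log_add_two_lt (ht : 0 ≤ t)
    (hP : ∀ j, P j → log ((j : ℝ) + 2) < t) :
    ∑' j : {j // P j}, (1 : ℝ) / ((j.1 : ℝ) + 1) ≤ (1 / log 2 + 1) * t := by
  have hlog2 : 0 < log 2 := log_pos one_lt_two
  rcases le_or_gt t (log 2) with hsmall | hlarge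
  · have : IsEmpty {j // P j} := ⟨fun ⟨j, hj⟩ => by
      have : log 2 ≤ log ((j : ℝ) + 2) :=
        log_le_log two_pos (by linarith [j.cast_nonneg (α := ℝ)])
      linarith [hP j hj]⟩
    rw [tsum_empty]
    positivity
  · have : 1 ≤ t / log 2 := (one_le_div hlog2).mpr hlarge.le
    calc _ ≤ 1 + t := tsum_one_div_succ_le_one_add_of_log_add_two_lt ht hP
      _ ≤ t / log 2 + t := by linarith
      _ = (1 / log 2 + 1) * t := by ring

end LogLevelSet

theorem weak_class_discrete (p α : ℝ) (hp : 0 < p) (hα : α = 1/p) :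
    ∃ C : ℝ, ∀ s > (0 : ℝ),
      s ^ p * ∑' j : {j : ℕ // s < (Real.log ((j : ℝ) + 2)) ^ (-α)},
        (1 : ℝ) / ((j.1 : ℝ) + 1) ≤ C := by
  refine ⟨1 / log 2 + 1, fun s hs => ?_⟩
  have hlevel (j : ℕ) (hj : s < log ((j : ℝ) + 2) ^ (-α)) :
      log ((j : ℝ) + 2) < s ^ (-p) := by
    rw [hα, one_div, neg_inv] at hj
    exact (lt_rpow_inv_iff_of_neg hs (log_pos (by linarith [j.cast_nonneg (α := ℝ)]))
      (neg_lt_zero.mpr hp)).mp hj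
  calc _ ≤ s ^ p * ((1 / log 2 + 1) * s ^ (-p)) := by
        gcongr
        exact tsum_one_div_succ_le_mul_of_log_add_two_lt (rpow_nonneg hs.le _) hlevel
    _ = 1 / log 2 + 1 := by
        rw [mul_left_comm, ← rpow_add hs, add_neg_cancel, rpow_zero, mul_one]
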